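/- The ∧R case of the interpolation construction: if C' interpolates (Γ₁ ⊢ Δ₁, A, C' and C', Γ₂ ⊢ Δ₂) and C'' interpolates (Γ₁ ⊢ Δ₁, B, C'' and C'', Γ₂ ⊢ Δ₂), and A ∧ B ∈ Δ₁, then C' ∨ C'' interpolates: Γ₁ ⊢ Δ₁, C' ∨ C'' and C' ∨ C'', Γ₂ ⊢ Δ₂ are derivable. -/

import Mathlib

namespace Craig

abbrev var : Type := Nat
abbrev tm : Type := var
abbrev pred : Type := Nat

inductive form : Type
  | P : pred → List tm → form
  | Bot : form
  | Top : form
  | And : form → form → form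
  | Or : form → form → form
  | Not : form → form
  | FAll : form → form
  | FEx : form → form
  deriving DecidableEq

def liftSub (s : var → tm) : var → tm
  | 0 => 0
  | n + 1 => (s n) + 1

def fsubst (s : var → tm) : form → form
  | .P i tms => .P i (tms.map s)
  | .Bot => .Bot
  | .Top => .Top
  | .And A B => .And (fsubst s A) (fsubst s B)
  | .Or A B => .Or (fsubst s A) (fsubst s B)
  | .Not A => .Not (fsubst s A)
  | .FAll A => .FAll (fsubst (liftSub s) A)
  | .FEx A => .FEx (fsubst (liftSub s) A)

def preSuc : List Nat → List Nat
  | [] => []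
  | 0 :: l => preSuc l
  | (n + 1) :: l => n :: preSuc l

def fv : form → List var
  | .P _ tms => tms
  | .Bot => []
  | .Top => []
  | .And A B => fv A ++ fv B
  | .Or A B => fv A ++ fv B
  | .Not A => fv A
  | .FAll A => preSuc (fv A)
  | .FEx A => preSuc (fv A)

def posneg : form → Set pred × Set pred
  | .P i _ => ({i}, ∅)
  | .Bot => (∅, ∅)
  | .Top => (∅, ∅)
  | .And A B => ((posneg A).1 ∪ (posneg B).1, (posneg A).2 ∪ (posneg B).2)
  | .Or A B => ((posneg A).1 ∪ (posneg B).1, (posneg A).2 ∪ (posneg B).2)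
  | .Not A => ((posneg A).2, (posneg A).1)
  | .FAll A => posneg A
  | .FEx A => posneg A

def pos (A : form) : Set pred := (posneg A).1
def neg (A : form) : Set pred := (posneg A).2

def fAll (a : var) (A : form) : form :=
  .FAll (fsubst (fun v => if v = a then 0 else v + 1) A)
def fEx (a : var) (A : form) : form :=
  .FEx (fsubst (fun v => if v = a then 0 else v + 1) A)

def FAll_inst (t : tm) : form → form
  | .FAll A => fsubst (fun v => match v with | 0 => t | n + 1 => n) A
  | A => A

def FEx_inst (t : tm) : form → form
  | .FEx A => fsubst (fun v => match v with | 0 => t | n + 1 => n) A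
  | A => A

abbrev Seq : Type := Set form × Set form

def fvs (S : Set form) : Set var := ⋃ A ∈ S, {v | v ∈ fv A}

inductive Deriv : Type
  | Init : Seq → Deriv
  | BotL : Seq → Deriv
  | TopR : Seq → Deriv
  | AndL : Seq → Deriv → Deriv
  | AndR : Seq → Deriv → Deriv → Deriv
  | OrL : Seq → Deriv → Deriv → Deriv
  | OrR : Seq → Deriv → Deriv
  | NotL : Seq → Deriv → Deriv
  | NotR : Seq → Deriv → Deriv
  | AllL : Seq → Deriv → Deriv
  | AllR : Seq → Deriv → Deriv
  | ExL : Seq → Deriv → Deriv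
  | ExR : Seq → Deriv → Deriv
  | WL : Seq → Deriv → Deriv
  | WR : Seq → Deriv → Deriv

def root : Deriv → Seq
  | .Init s => s
  | .BotL s => s
  | .TopR s => s
  | .AndL s _ => s
  | .AndR s _ _ => s
  | .OrL s _ _ => s
  | .OrR s _ => s
  | .NotL s _ => s
  | .NotR s _ => s
  | .AllL s _ => s
  | .AllR s _ => s
  | .ExL s _ => s
  | .ExR s _ => s
  | .WL s _ => s
  | .WR s _ => s

def is_deriv : Deriv → Prop
  | .Init s => s.1.Finite ∧ s.2.Finite ∧ ∃ A, A ∈ s.1 ∧ A ∈ s.2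
  | .BotL s => s.1.Finite ∧ s.2.Finite ∧ form.Bot ∈ s.1
  | .TopR s => s.1.Finite ∧ s.2.Finite ∧ form.Top ∈ s.2
  | .AndL s d => s.1.Finite ∧ s.2.Finite ∧
      ∃ A B, form.And A B ∈ s.1 ∧ is_deriv d ∧ root d = ({A, B} ∪ s.1, s.2)
  | .AndR s dl dr => s.1.Finite ∧ s.2.Finite ∧
      ∃ A B, form.And A B ∈ s.2 ∧ is_deriv dl ∧ root dl = (s.1, s.2 ∪ {A}) ∧
        is_deriv dr ∧ root dr = (s.1, s.2 ∪ {B})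
  | .OrL s dl dr => s.1.Finite ∧ s.2.Finite ∧
      ∃ A B, form.Or A B ∈ s.1 ∧ is_deriv dl ∧ root dl = ({A} ∪ s.1, s.2) ∧
        is_deriv dr ∧ root dr = ({B} ∪ s.1, s.2)
  | .OrR s d => s.1.Finite ∧ s.2.Finite ∧
      ∃ A B, form.Or A B ∈ s.2 ∧ is_deriv d ∧ root d = (s.1, s.2 ∪ {A, B})
  | .NotL s d => s.1.Finite ∧ s.2.Finite ∧
      ∃ C, form.Not C ∈ s.1 ∧ is_deriv d ∧ root d = (s.1, s.2 ∪ {C})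
  | .NotR s d => s.1.Finite ∧ s.2.Finite ∧
      ∃ C, form.Not C ∈ s.2 ∧ is_deriv d ∧ root d = ({C} ∪ s.1, s.2)
  | .AllL s d => s.1.Finite ∧ s.2.Finite ∧
      ∃ A a t, fAll a A ∈ s.1 ∧ is_deriv d ∧
        root d = ({FAll_inst t (fAll a A)} ∪ s.1, s.2)
  | .AllR s d => s.1.Finite ∧ s.2.Finite ∧
      ∃ a A, fAll a A ∈ s.2 ∧ a ∉ fvs (s.1 ∪ s.2) ∧ is_deriv d ∧
        root d = (s.1, s.2 ∪ {A})
  | .ExL s d => s.1.Finite ∧ s.2.Finite ∧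
      ∃ a A, fEx a A ∈ s.1 ∧ a ∉ fvs (s.1 ∪ s.2) ∧ is_deriv d ∧
        root d = ({A} ∪ s.1, s.2)
  | .ExR s d => s.1.Finite ∧ s.2.Finite ∧
      ∃ A a t, fEx a A ∈ s.2 ∧ is_deriv d ∧
        root d = (s.1, s.2 ∪ {FEx_inst t (fEx a A)})
  | .WL s d => ∃ Γ Δ A, Γ.Finite ∧ Δ.Finite ∧ is_deriv d ∧ root d = (Γ, Δ) ∧
      s = ({A} ∪ Γ, Δ)
  | .WR s d => ∃ Γ Δ A, Γ.Finite ∧ Δ.Finite ∧ is_deriv d ∧ root d = (Γ, Δ) ∧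
      s = (Γ, Δ ∪ {A})

def derivable (s : Seq) : Prop := ∃ d, is_deriv d ∧ root d = s

/-
Split the left side with ∧R on `A ∧ B ∈ Δ₁`. In each branch ∨R replaces `C' ∨ C''` by `C', C''`,
and weakening reduces to the hypothesis for `A` resp. `B`. The right side is ∨L on `C' ∨ C''`
followed by weakening into the hypotheses for `C'` and `C''`.
-/

theorem is_deriv.root_finite {d : Deriv} (h : is_deriv d) :
    (root d).1.Finite ∧ (root d).2.Finite := by
  cases d <;> simp only [is_deriv, root] at h ⊢
  case WL =>
    obtain ⟨Γ, Δ, A, hΓ, hΔ, -, -, rfl⟩ := h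
    exact ⟨(Set.finite_singleton A).union hΓ, hΔ⟩
  case WR =>
    obtain ⟨Γ, Δ, A, hΓ, hΔ, -, -, rfl⟩ := h
    exact ⟨hΓ, hΔ.union (Set.finite_singleton A)⟩
  all_goals exact ⟨h.1, h.2.1⟩

namespace derivable

variable {Γ Δ : Set form}

theorem finite {s : Seq} (h : derivable s) : s.1.Finite ∧ s.2.Finite := by
  obtain ⟨d, hd, rfl⟩ := h
  exact hd.root_finite

theorem wl (A : form) (h : derivable (Γ, Δ)) : derivable ({A} ∪ Γ, Δ) :=
  let ⟨d, hd, hr⟩ := h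
  ⟨.WL ({A} ∪ Γ, Δ) d, ⟨Γ, Δ, A, h.finite.1, h.finite.2, hd, hr, rfl⟩, rfl⟩

theorem wr (A : form) (h : derivable (Γ, Δ)) : derivable (Γ, Δ ∪ {A}) :=
  let ⟨d, hd, hr⟩ := h
  ⟨.WR (Γ, Δ ∪ {A}) d, ⟨Γ, Δ, A, h.finite.1, h.finite.2, hd, hr, rfl⟩, rfl⟩

theorem weaken_left {Γ' : Set form} (h : derivable (Γ, Δ)) (hsub : Γ ⊆ Γ') (hfin : Γ'.Finite) :
    derivable (Γ', Δ) := by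
  suffices ∀ S : Set form, S.Finite → derivable (S ∪ Γ, Δ) by
    simpa [Set.union_eq_left.mpr hsub] using this Γ' hfin
  intro S hS
  induction S, hS using Set.Finite.induction_on with
  | empty => simpa using h
  | @insert a S _ _ ih =>
    rw [Set.insert_union, Set.insert_eq]
    exact ih.wl a

theorem weaken_right {Δ' : Set form} (h : derivable (Γ, Δ)) (hsub : Δ ⊆ Δ') (hfin : Δ'.Finite) :
    derivable (Γ, Δ') := by
  suffices ∀ S : Set form, S.Finite → derivable (Γ, Δ ∪ S) by
    simpa [Set.union_eq_right.mpr hsub] using this Δ' hfin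
  intro S hS
  induction S, hS using Set.Finite.induction_on with
  | empty => simpa using h
  | @insert a S _ _ ih =>
    rw [Set.union_insert, Set.insert_eq, Set.union_comm]
    exact ih.wr a

theorem andR {A B : form} (hmem : form.And A B ∈ Δ) (hA : derivable (Γ, Δ ∪ {A}))
    (hB : derivable (Γ, Δ ∪ {B})) : derivable (Γ, Δ) :=
  let ⟨dA, hdA, hrA⟩ := hA
  let ⟨dB, hdB, hrB⟩ := hB
  ⟨.AndR (Γ, Δ) dA dB, ⟨hA.finite.1, hA.finite.2.subset Set.subset_union_left,
    A, B, hmem, hdA, hrA, hdB, hrB⟩, rfl⟩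

theorem orR {A B : form} (hmem : form.Or A B ∈ Δ) (h : derivable (Γ, Δ ∪ {A, B})) :
    derivable (Γ, Δ) :=
  let ⟨d, hd, hr⟩ := h
  ⟨.OrR (Γ, Δ) d, ⟨h.finite.1, h.finite.2.subset Set.subset_union_left, A, B, hmem, hd, hr⟩, rfl⟩

theorem orL {A B : form} (hmem : form.Or A B ∈ Γ) (hA : derivable ({A} ∪ Γ, Δ))
    (hB : derivable ({B} ∪ Γ, Δ)) : derivable (Γ, Δ) :=
  let ⟨dA, hdA, hrA⟩ := hA
  let ⟨dB, hdB, hrB⟩ := hB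
  ⟨.OrL (Γ, Δ) dA dB, ⟨hA.finite.1.subset Set.subset_union_right, hA.finite.2,
    A, B, hmem, hdA, hrA, hdB, hrB⟩, rfl⟩

end derivable

theorem andR_interpolation_case (Γ₁ Γ₂ Δ₁ Δ₂ : Set form) (A B C' C'' : form)
    (hmem : form.And A B ∈ Δ₁)
    (h1 : derivable (Γ₁, Δ₁ ∪ {A, C'}))
    (h2 : derivable ({C'} ∪ Γ₂, Δ₂))
    (h3 : derivable (Γ₁, Δ₁ ∪ {B, C''}))
    (h4 : derivable ({C''} ∪ Γ₂, Δ₂)) :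
    derivable (Γ₁, Δ₁ ∪ {form.Or C' C''}) ∧
    derivable ({form.Or C' C''} ∪ Γ₂, Δ₂) := by
  have hΔ₁ : Δ₁.Finite := h1.finite.2.subset Set.subset_union_left
  have hΓ₂ : Γ₂.Finite := h2.finite.1.subset Set.subset_union_right
  refine ⟨.andR (Set.mem_union_left _ hmem) ?_ ?_, .orL (Set.mem_union_left _ rfl) ?_ ?_⟩
  · refine .orR (A := C') (B := C'') (by simp) (h1.weaken_right ?_ (by simp [hΔ₁]))
    intro x; simp only [Set.mem_union, Set.mem_insert_iff, Set.mem_singleton_iff]; tauto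
  · refine .orR (A := C') (B := C'') (by simp) (h3.weaken_right ?_ (by simp [hΔ₁]))
    intro x; simp only [Set.mem_union, Set.mem_insert_iff, Set.mem_singleton_iff]; tauto
  · exact h2.weaken_left (Set.union_subset_union_right _ Set.subset_union_right) (by simp [hΓ₂])
  · exact h4.weaken_left (Set.union_subset_union_right _ Set.subset_union_right) (by simp [hΓ₂])

end Craig
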